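/- Let Φ : [0,∞) → [0,∞) be continuous and monotonically increasing, α > 0, and ε ∈ (0,1). Define Φ_ε : ℝ^d_* → [0,∞) by Φ_ε(x) = Φ(ε^{-α}) |x|/ε if |x| < ε and Φ_ε(x) = Φ(|x|^{-α}) if |x| ≥ ε. Then Φ_ε is subadditive: Φ_ε(x+y) ≤ Φ_ε(x) + Φ_ε(y) for all x, y ∈ ℝ^d_*. -/

import Mathlib

/-!
On the ray t = |x| > 0 the regularisation is the minimum of the linear function
t ↦ Φ(ε^{-α}) t/ε and the nonincreasing function t ↦ Φ(t^{-α}): the two cross at t = ε.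
Since |x + y| = |x| + |y|, subadditivity of such a minimum is elementary: if the minimum at
x or at y is attained by the nonincreasing branch, that branch alone already bounds the value
at x + y; otherwise the linear branch is additive.
-/

open Real

def l1norm {d : ℕ} (x : Fin d → ℝ) : ℝ := ∑ i, x i

def memRdStar {d : ℕ} (x : Fin d → ℝ) : Prop := (∀ i, 0 ≤ x i) ∧ x ≠ 0

/-- The regularisation Φ_ε of x ↦ Φ(|x|^{-α}). -/
noncomputable def PhiEps {d : ℕ} (Φ : ℝ → ℝ) (α ε : ℝ) (x : Fin d → ℝ) : ℝ :=
  if l1norm x < ε then Φ (ε ^ (-α)) * (l1norm x / ε) else Φ ((l1norm x) ^ (-α))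

theorem min_le_min_add_min {β : Type*} [AddCommMonoid β] [LinearOrder β] [IsOrderedAddMonoid β]
    {l₁ l₂ l g₁ g₂ g : β} (hl : l ≤ l₁ + l₂) (hg₁ : g ≤ g₁) (hg₂ : g ≤ g₂)
    (h₁ : 0 ≤ min l₁ g₁) (h₂ : 0 ≤ min l₂ g₂) : min l g ≤ min l₁ g₁ + min l₂ g₂ := by
  rcases min_choice l₁ g₁ with e₁ | e₁
  · rcases min_choice l₂ g₂ with e₂ | e₂
    · rw [e₁, e₂]
      exact min_le_of_left_le hl
    · calc min l g ≤ g₂ := min_le_of_right_le hg₂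
        _ ≤ min l₁ g₁ + min l₂ g₂ := by rw [e₂]; exact le_add_of_nonneg_left h₁
  · calc min l g ≤ g₁ := min_le_of_right_le hg₁
      _ ≤ min l₁ g₁ + min l₂ g₂ := by rw [e₁]; exact le_add_of_nonneg_right h₂

theorem l1norm_add {d : ℕ} (x y : Fin d → ℝ) : l1norm (x + y) = l1norm x + l1norm y :=
  Finset.sum_add_distrib

theorem l1norm_pos {d : ℕ} {x : Fin d → ℝ} (hx : memRdStar x) : 0 < l1norm x := by
  obtain ⟨h0, hne⟩ := hx
  obtain ⟨i, hi⟩ := Function.ne_iff.mp hne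
  exact Finset.sum_pos' (fun j _ => h0 j) ⟨i, Finset.mem_univ i, (h0 i).lt_of_ne' hi⟩

theorem antitoneOn_comp_rpow_neg {Φ : ℝ → ℝ} {α : ℝ} (hΦ : MonotoneOn Φ (Set.Ici 0))
    (hα : 0 ≤ α) : AntitoneOn (fun t => Φ (t ^ (-α))) (Set.Ioi 0) :=
  fun _ hs _ ht hst => hΦ (rpow_nonneg (le_of_lt ht) _) (rpow_nonneg (le_of_lt hs) _)
    (rpow_le_rpow_of_nonpos hs hst (neg_nonpos.2 hα))

theorem PhiEps_eq_min {d : ℕ} {Φ : ℝ → ℝ} {α ε : ℝ} (hΦmono : MonotoneOn Φ (Set.Ici 0))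
    (hΦnonneg : 0 ≤ Φ (ε ^ (-α))) (hα : 0 ≤ α) (hε : 0 < ε) {x : Fin d → ℝ}
    (hx : 0 < l1norm x) :
    PhiEps Φ α ε x = min (Φ (ε ^ (-α)) * (l1norm x / ε)) (Φ (l1norm x ^ (-α))) := by
  have hanti := antitoneOn_comp_rpow_neg hΦmono hα
  unfold PhiEps
  split_ifs with h
  · refine (min_eq_left ?_).symm
    calc Φ (ε ^ (-α)) * (l1norm x / ε) ≤ Φ (ε ^ (-α)) * 1 :=
          mul_le_mul_of_nonneg_left ((div_le_one hε).2 h.le) hΦnonneg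
      _ ≤ Φ (l1norm x ^ (-α)) := by rw [mul_one]; exact hanti hx hε h.le
  · push Not at h
    refine (min_eq_right ?_).symm
    calc Φ (l1norm x ^ (-α)) ≤ Φ (ε ^ (-α)) * 1 := by rw [mul_one]; exact hanti hε hx h
      _ ≤ Φ (ε ^ (-α)) * (l1norm x / ε) :=
          mul_le_mul_of_nonneg_left ((one_le_div hε).2 h) hΦnonneg

theorem PhiEps_subadditive_general {d : ℕ} (Φ : ℝ → ℝ) (α ε : ℝ)
    (hΦmono : MonotoneOn Φ (Set.Ici 0))
    (hΦnonneg : ∀ r : ℝ, 0 ≤ r → 0 ≤ Φ r)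
    (hα : 0 < α) (hε : ε ∈ Set.Ioo (0:ℝ) 1) :
    ∀ x y : Fin d → ℝ, memRdStar x → memRdStar y →
      PhiEps Φ α ε (x + y) ≤ PhiEps Φ α ε x + PhiEps Φ α ε y := by
  intro x y hx hy
  have ha := l1norm_pos hx
  have hb := l1norm_pos hy
  have hab : 0 < l1norm (x + y) := l1norm_add x y ▸ add_pos ha hb
  have hC := hΦnonneg _ (rpow_nonneg hε.1.le (-α))
  have hanti := antitoneOn_comp_rpow_neg hΦmono hα.le
  have hnonneg {t : ℝ} (ht : 0 < t) : 0 ≤ min (Φ (ε ^ (-α)) * (t / ε)) (Φ (t ^ (-α))) :=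
    le_min (mul_nonneg hC (div_nonneg ht.le hε.1.le)) (hΦnonneg _ (rpow_nonneg ht.le _))
  simp only [PhiEps_eq_min hΦmono hC hα.le hε.1 ha, PhiEps_eq_min hΦmono hC hα.le hε.1 hb,
    PhiEps_eq_min hΦmono hC hα.le hε.1 hab]
  rw [l1norm_add] at hab ⊢
  refine min_le_min_add_min (le_of_eq (by ring)) (hanti ha hab ?_) (hanti hb hab ?_)
    (hnonneg ha) (hnonneg hb) <;> linarith

/-- For continuous monotonically increasing Φ : [0,∞) → [0,∞), α > 0, ε ∈ (0,1),
the regularisation Φ_ε is subadditive on ℝ^d_*. -/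
theorem PhiEps_subadditive {d : ℕ} (Φ : ℝ → ℝ) (α ε : ℝ)
    (hΦcont : ContinuousOn Φ (Set.Ici 0))
    (hΦmono : MonotoneOn Φ (Set.Ici 0))
    (hΦnonneg : ∀ r : ℝ, 0 ≤ r → 0 ≤ Φ r)
    (hα : 0 < α) (hε : ε ∈ Set.Ioo (0:ℝ) 1) :
    ∀ x y : Fin d → ℝ, memRdStar x → memRdStar y →
      PhiEps Φ α ε (x + y) ≤ PhiEps Φ α ε x + PhiEps Φ α ε y :=
  PhiEps_subadditive_general Φ α ε hΦmono hΦnonneg hα hε
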